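/- arXiv:1708.01763 — 5 statements merged into one kernel-verified Lean document; each statement's English description precedes it below -/
import Mathlib

section
/- Let Γ be a group and Δ ≤ Λ ≤ Γ nested subgroups. Suppose that every Δ-invariant complex-valued function of conditionally negative type on Γ is bounded on Λ. Then for every unitary representation (π, H) of Γ and every cocycle b for π that is Δ-trivial, the restriction of b to Λ is a coboundary, i.e. there exists ξ ∈ H with b(λ) = ξ − π(λ)ξ for all λ ∈ Λ. -/
open scoped InnerProductSpace ComplexConjugate ComplexOrder BigOperators

section Defs

variable {Γ : Type} [Group Γ]

/-- A complex-valued function of positive type on a group. -/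
def IsPosType (φ : Γ → ℂ) : Prop :=
  ∀ (n : ℕ), 1 ≤ n → ∀ (γ : Fin n → Γ) (c : Fin n → ℂ),
    0 ≤ ∑ i, ∑ j, conj (c i) * c j * φ ((γ i)⁻¹ * γ j)

/-- A real-valued function of positive type on a group. -/
def IsRealPosType (φ : Γ → ℝ) : Prop :=
  (∀ γ : Γ, φ γ⁻¹ = φ γ) ∧
  ∀ (n : ℕ), 1 ≤ n → ∀ (γ : Fin n → Γ) (c : Fin n → ℝ),
    0 ≤ ∑ i, ∑ j, c i * c j * φ ((γ i)⁻¹ * γ j)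

/-- A complex-valued function of conditionally negative type on a group. -/
def IsCondNegType (ψ : Γ → ℂ) : Prop :=
  ψ 1 = 0 ∧ (∀ γ : Γ, ψ γ⁻¹ = conj (ψ γ)) ∧
  ∀ (n : ℕ), 2 ≤ n → ∀ (γ : Fin n → Γ) (c : Fin n → ℂ), (∑ i, c i) = 0 →
    ∑ i, ∑ j, conj (c i) * c j * ψ ((γ i)⁻¹ * γ j) ≤ 0

/-- A real-valued function of conditionally negative type on a group. -/
def IsRealCondNegType (ψ : Γ → ℝ) : Prop :=
  ψ 1 = 0 ∧ (∀ γ : Γ, ψ γ⁻¹ = ψ γ) ∧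
  ∀ (n : ℕ), 2 ≤ n → ∀ (γ : Fin n → Γ) (c : Fin n → ℝ), (∑ i, c i) = 0 →
    ∑ i, ∑ j, c i * c j * ψ ((γ i)⁻¹ * γ j) ≤ 0

/-- A function on Γ is Δ-(bi-)invariant if it is unchanged under left and right
multiplication by elements of Δ. -/
def IsInvariantUnder {α : Type*} (Δ : Subgroup Γ) (ψ : Γ → α) : Prop :=
  ∀ d₀ ∈ Δ, ∀ d₁ ∈ Δ, ∀ γ : Γ, ψ (d₀ * γ * d₁) = ψ γ

/-- The triple Δ ≤ Λ ≤ Γ has property (T): every unitary representation of Γ with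
almost invariant Δ-invariant unit vectors has a Λ-invariant unit vector. -/
def HasPropertyT (Δ Λ : Subgroup Γ) : Prop :=
  ∀ (H : Type) [NormedAddCommGroup H] [InnerProductSpace ℂ H] [CompleteSpace H]
    (π : Γ →* (H ≃ₗᵢ[ℂ] H)),
    (∀ (F : Finset Γ) (ε : ℝ), 0 < ε →
      ∃ ξ : H, ‖ξ‖ = 1 ∧ (∀ d ∈ Δ, π d ξ = ξ) ∧ ∀ γ ∈ F, ‖π γ ξ - ξ‖ ≤ ε) →
    ∃ η : H, ‖η‖ = 1 ∧ ∀ l ∈ Λ, π l η = η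

end Defs

/-
The function `γ ↦ ‖b γ‖²` is `Δ`-invariant and conditionally of negative type, so by hypothesis
`b` is bounded on `Λ`. The affine isometries `x ↦ π λ x + b λ` (`λ ∈ Λ`) permute the bounded set
`{b λ | λ ∈ Λ}`, hence fix its Chebyshev centre: the centre of the smallest closed ball containing
it, which exists and is unique because the parallelogram law makes `x ↦ (sup_λ ‖x - b λ‖)²`
uniformly convex. A fixed point `ξ` means exactly `b λ = ξ - π λ ξ`.
-/

open Filter Topology Bornology

theorem sum_sum_conj_mul_norm_sub_sq_of_sum_eq_zero {𝕜 E ι : Type*} [RCLike 𝕜]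
    [NormedAddCommGroup E] [InnerProductSpace 𝕜 E] [Fintype ι] (v : ι → E) (c : ι → 𝕜)
    (hc : ∑ i, c i = 0) :
    ∑ i, ∑ j, conj (c i) * c j * (‖v j - v i‖ : 𝕜) ^ 2 =
      -((‖∑ i, c i • v i‖ : 𝕜) ^ 2 + (‖∑ i, conj (c i) • v i‖ : 𝕜) ^ 2) := by
  have hc' : ∑ i, conj (c i) = 0 := by rw [← map_sum, hc, map_zero]
  simp only [← inner_self_eq_norm_sq_to_K (𝕜 := 𝕜), inner_sub_sub_self, sum_inner, inner_sum,
    inner_smul_left, inner_smul_right, RCLike.conj_conj, mul_sub, mul_add, Finset.sum_add_distrib,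
    Finset.sum_sub_distrib]
  have hjj : ∑ i, ∑ j, conj (c i) * c j * ⟪v j, v j⟫_𝕜 = 0 := by
    simp_rw [mul_assoc, ← Finset.mul_sum, ← Finset.sum_mul, hc', zero_mul]
  have hii : ∑ i, ∑ j, conj (c i) * c j * ⟪v i, v i⟫_𝕜 = 0 := by
    refine Finset.sum_eq_zero fun i _ => ?_
    rw [← Finset.sum_mul, ← Finset.mul_sum, hc, mul_zero, zero_mul]
  rw [hjj, hii]
  simp only [Finset.mul_sum]
  rw [Finset.sum_comm (f := fun x y => c x * (conj (c y) * ⟪v y, v x⟫_𝕜))]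
  simp only [mul_left_comm (c _), ← mul_assoc]
  ring

section ChebyshevCenter

variable {E ι : Type*} [NormedAddCommGroup E] {f : ι → E}

noncomputable def supDist (x : E) (f : ι → E) : ℝ := ⨆ i, ‖x - f i‖

theorem supDist_nonneg (x : E) (f : ι → E) : 0 ≤ supDist x f :=
  Real.iSup_nonneg fun _ => norm_nonneg _

theorem bddAbove_range_norm_sub (hf : IsBounded (Set.range f)) (x : E) :
    BddAbove (Set.range fun i => ‖x - f i‖) := by
  obtain ⟨R, hR⟩ := isBounded_iff_forall_norm_le.1 hf
  refine ⟨‖x‖ + R, Set.forall_mem_range.2 fun i => (norm_sub_le _ _).trans ?_⟩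
  gcongr
  exact hR _ ⟨i, rfl⟩

theorem norm_sub_le_supDist (hf : IsBounded (Set.range f)) (x : E) (i : ι) :
    ‖x - f i‖ ≤ supDist x f :=
  le_ciSup (bddAbove_range_norm_sub hf x) i

theorem lipschitzWith_supDist (hf : IsBounded (Set.range f)) :
    LipschitzWith 1 fun x => supDist x f := by
  refine LipschitzWith.of_le_add fun x y =>
    Real.iSup_le (fun i => ?_) (add_nonneg (supDist_nonneg y f) dist_nonneg)
  calc ‖x - f i‖ ≤ ‖y - f i‖ + ‖x - y‖ := by
        simpa using norm_add_le (y - f i) (x - y)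
    _ ≤ supDist y f + dist x y := by
        rw [dist_eq_norm]
        gcongr
        exact norm_sub_le_supDist hf y i

variable [InnerProductSpace ℝ E] [Nonempty ι]

theorem norm_sub_sq_add_four_mul_supDist_midpoint_sq_le (hf : IsBounded (Set.range f))
    (x x' : E) :
    ‖x - x'‖ ^ 2 + 4 * supDist ((2 : ℝ)⁻¹ • (x + x')) f ^ 2 ≤
      2 * supDist x f ^ 2 + 2 * supDist x' f ^ 2 := by
  set Q := (2 * supDist x f ^ 2 + 2 * supDist x' f ^ 2 - ‖x - x'‖ ^ 2) / 4 with hQ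
  have hpoint : ∀ i, ‖(2 : ℝ)⁻¹ • (x + x') - f i‖ ^ 2 ≤ Q := fun i => by
    have hpar := parallelogram_law_with_norm ℝ (x - f i) (x' - f i)
    have hmid : (x - f i) + (x' - f i) = (2 : ℝ) • ((2 : ℝ)⁻¹ • (x + x') - f i) := by module
    rw [hmid, norm_smul, sub_sub_sub_cancel_right, Real.norm_two] at hpar
    have := pow_le_pow_left₀ (norm_nonneg _) (norm_sub_le_supDist hf x i) 2
    have := pow_le_pow_left₀ (norm_nonneg _) (norm_sub_le_supDist hf x' i) 2
    rw [hQ]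
    linarith
  have hQ0 : 0 ≤ Q := (sq_nonneg _).trans (hpoint (Classical.arbitrary ι))
  have : supDist ((2 : ℝ)⁻¹ • (x + x')) f ^ 2 ≤ Q :=
    (Real.le_sqrt (supDist_nonneg _ f) hQ0).1 (ciSup_le fun i => Real.le_sqrt_of_sq_le (hpoint i))
  rw [hQ] at this
  linarith

theorem eq_of_supDist_le_of_forall_supDist_le (hf : IsBounded (Set.range f)) {ξ x : E}
    (hξ : ∀ y, supDist ξ f ≤ supDist y f) (hx : supDist x f ≤ supDist ξ f) : x = ξ := by
  have key := norm_sub_sq_add_four_mul_supDist_midpoint_sq_le hf x ξ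
  have hmid := hξ ((2 : ℝ)⁻¹ • (x + ξ))
  have h0 := supDist_nonneg ξ f
  have h1 := supDist_nonneg x f
  have : ‖x - ξ‖ ^ 2 ≤ 0 := by nlinarith
  rw [← sub_eq_zero, ← norm_eq_zero]
  exact pow_eq_zero_iff two_ne_zero |>.1 (le_antisymm this (sq_nonneg _))

theorem exists_forall_supDist_le [CompleteSpace E] (hf : IsBounded (Set.range f)) :
    ∃ ξ : E, ∀ x, supDist ξ f ≤ supDist x f := by
  set m := ⨅ x, supDist x f
  have hbdd : BddBelow (Set.range fun x => supDist x f) :=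
    ⟨0, Set.forall_mem_range.2 fun x => supDist_nonneg x f⟩
  have hm : ∀ x, m ≤ supDist x f := ciInf_le hbdd
  have hm0 : 0 ≤ m := le_ciInf fun x => supDist_nonneg x f
  have hdist (x x' : E) :
      ‖x - x'‖ ^ 2 ≤ 2 * (supDist x f ^ 2 - m ^ 2) + 2 * (supDist x' f ^ 2 - m ^ 2) := by
    have key := norm_sub_sq_add_four_mul_supDist_midpoint_sq_le hf x x'
    have := pow_le_pow_left₀ hm0 (hm ((2 : ℝ)⁻¹ • (x + x'))) 2
    linarith
  obtain ⟨u, -, hu, hu_mem⟩ := exists_seq_tendsto_sInf (Set.range_nonempty _) hbdd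
  choose x hx using hu_mem
  have hxm : Tendsto (fun n => supDist (x n) f) atTop (𝓝 m) := by
    rw [show (fun n => supDist (x n) f) = u from funext hx]
    exact hu
  have hgap : Tendsto (fun n => supDist (x n) f ^ 2 - m ^ 2) atTop (𝓝 0) := by
    rw [← sub_self (m ^ 2)]
    exact (hxm.pow 2).sub_const (m ^ 2)
  have hcauchy : CauchySeq x := by
    refine Metric.cauchySeq_iff'.2 fun ε hε => ?_
    obtain ⟨N, hN⟩ := eventually_atTop.1 ((tendsto_order.1 hgap).2 (ε ^ 2 / 4) (by positivity))
    refine ⟨N, fun n hn => lt_of_pow_lt_pow_left₀ 2 hε.le ?_⟩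
    rw [dist_eq_norm]
    linarith [hdist (x n) (x N), hN n hn, hN N le_rfl]
  obtain ⟨ξ, hξ⟩ := cauchySeq_tendsto_of_complete hcauchy
  have hξm : supDist ξ f = m :=
    tendsto_nhds_unique (((lipschitzWith_supDist hf).continuous.tendsto ξ).comp hξ) hxm
  exact ⟨ξ, fun y => hξm ▸ hm y⟩

end ChebyshevCenter

section Cocycle

variable {𝕜 G E : Type*} [Group G]

def IsCocycle [NormedField 𝕜] [SeminormedAddCommGroup E] [NormedSpace 𝕜 E]
    (π : G →* (E ≃ₗᵢ[𝕜] E)) (b : G → E) : Prop :=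
  ∀ g h, b (g * h) = b g + π g (b h)

namespace IsCocycle

section Normed

variable [NormedField 𝕜] [NormedAddCommGroup E] [NormedSpace 𝕜 E]
  {π : G →* (E ≃ₗᵢ[𝕜] E)} {b : G → E}

theorem map_one (hb : IsCocycle π b) : b 1 = 0 := by
  simpa using hb 1 1

theorem map_inv (hb : IsCocycle π b) (g : G) : b g⁻¹ = -π g⁻¹ (b g) :=
  eq_neg_of_add_eq_zero_left (by rw [← hb, inv_mul_cancel, hb.map_one])

theorem map_inv_mul (hb : IsCocycle π b) (g h : G) : b (g⁻¹ * h) = π g⁻¹ (b h - b g) := by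
  rw [hb, hb.map_inv, map_sub]
  abel

theorem norm_map_inv (hb : IsCocycle π b) (g : G) : ‖b g⁻¹‖ = ‖b g‖ := by
  rw [hb.map_inv, norm_neg, LinearIsometryEquiv.norm_map]

theorem norm_map_inv_mul (hb : IsCocycle π b) (g h : G) : ‖b (g⁻¹ * h)‖ = ‖b h - b g‖ := by
  rw [hb.map_inv_mul, LinearIsometryEquiv.norm_map]

theorem map_mul_mul_of_map_eq_zero (hb : IsCocycle π b) {d₀ d₁ : G} (h₀ : b d₀ = 0)
    (h₁ : b d₁ = 0) (g : G) : b (d₀ * g * d₁) = π d₀ (b g) := by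
  rw [hb, hb, h₀, h₁, map_zero, zero_add, add_zero]

theorem supDist_apply_add (hb : IsCocycle π b) {Λ : Subgroup G} (l : Λ) (x : E) :
    supDist (π l x + b l) (fun m : Λ => b m) = supDist x (fun m : Λ => b m) := by
  unfold supDist
  rw [← (Equiv.mulLeft l).iSup_comp]
  congr 1 with m
  dsimp only
  rw [Equiv.coe_mulLeft, Subgroup.coe_mul, hb,
    show π l x + b l - (b l + π l (b m)) = π l (x - b m) by rw [map_sub]; abel,
    LinearIsometryEquiv.norm_map]

end Normed

theorem exists_eq_sub_of_isBounded_image [RCLike 𝕜] [NormedAddCommGroup E]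
    [InnerProductSpace 𝕜 E] [CompleteSpace E] {π : G →* (E ≃ₗᵢ[𝕜] E)} {b : G → E}
    (hb : IsCocycle π b) {Λ : Subgroup G} (hΛ : IsBounded (b '' Λ)) :
    ∃ ξ : E, ∀ l ∈ Λ, b l = ξ - π l ξ := by
  let _ : InnerProductSpace ℝ E := InnerProductSpace.rclikeToReal 𝕜 E
  rw [Set.image_eq_range] at hΛ
  obtain ⟨ξ, hξ⟩ := exists_forall_supDist_le hΛ
  exact ⟨ξ, fun l hl => eq_sub_of_add_eq' <|
    eq_of_supDist_le_of_forall_supDist_le hΛ hξ (hb.supDist_apply_add ⟨l, hl⟩ ξ).le⟩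

end IsCocycle

end Cocycle

namespace IsCocycle

variable {G E : Type} [Group G] [NormedAddCommGroup E] [InnerProductSpace ℂ E]
  {π : G →* (E ≃ₗᵢ[ℂ] E)} {b : G → E}

theorem isCondNegType_norm_sq (hb : IsCocycle π b) :
    IsCondNegType fun g => (‖b g‖ : ℂ) ^ 2 := by
  refine ⟨by simp [hb.map_one], fun g => by simp [hb.norm_map_inv], fun n _ γ c hc => ?_⟩
  simp only [hb.norm_map_inv_mul]
  refine (sum_sum_conj_mul_norm_sub_sq_of_sum_eq_zero (fun i => b (γ i)) c hc).trans_le ?_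
  rw [neg_nonpos]
  norm_cast
  positivity

theorem isInvariantUnder_comp_norm {α : Type*} (hb : IsCocycle π b) {Δ : Subgroup G}
    (hΔ : ∀ d ∈ Δ, b d = 0) (F : ℝ → α) : IsInvariantUnder Δ fun g => F ‖b g‖ :=
  fun d₀ h₀ d₁ h₁ g => by
    dsimp only
    rw [hb.map_mul_mul_of_map_eq_zero (hΔ d₀ h₀) (hΔ d₁ h₁), LinearIsometryEquiv.norm_map]

end IsCocycle

theorem stmt2_general (Γ : Type) [Group Γ] (Δ Λ : Subgroup Γ)
    (hbdd : ∀ ψ : Γ → ℂ, IsCondNegType ψ → IsInvariantUnder Δ ψ →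
      ∃ C : ℝ, ∀ l ∈ Λ, ‖ψ l‖ ≤ C) :
    ∀ (H : Type) [NormedAddCommGroup H] [InnerProductSpace ℂ H] [CompleteSpace H]
      (π : Γ →* (H ≃ₗᵢ[ℂ] H)) (b : Γ → H),
      (∀ γ ρ : Γ, b (γ * ρ) = b γ + π γ (b ρ)) →
      (∀ d ∈ Δ, b d = 0) →
      ∃ ξ : H, ∀ l ∈ Λ, b l = ξ - π l ξ := by
  intro H _ _ _ π b hcoc hΔ
  have hb : IsCocycle π b := hcoc
  obtain ⟨C, hC⟩ := hbdd _ hb.isCondNegType_norm_sq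
    (hb.isInvariantUnder_comp_norm hΔ fun t => (t : ℂ) ^ 2)
  refine hb.exists_eq_sub_of_isBounded_image (isBounded_iff_forall_norm_le.2 ⟨√C, ?_⟩)
  rintro _ ⟨l, hl, rfl⟩
  refine Real.le_sqrt_of_sq_le ?_
  simpa using hC l hl

/-- If every Δ-invariant complex-valued function of conditionally negative
type on Γ is bounded on Λ, then every Δ-trivial cocycle for a unitary representation of Γ
restricts to a coboundary on Λ. -/
theorem stmt2 (Γ : Type) [Group Γ] (Δ Λ : Subgroup Γ) (hΔΛ : Δ ≤ Λ)
    (hbdd : ∀ ψ : Γ → ℂ, IsCondNegType ψ → IsInvariantUnder Δ ψ →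
      ∃ C : ℝ, ∀ l ∈ Λ, ‖ψ l‖ ≤ C) :
    ∀ (H : Type) [NormedAddCommGroup H] [InnerProductSpace ℂ H] [CompleteSpace H]
      (π : Γ →* (H ≃ₗᵢ[ℂ] H)) (b : Γ → H),
      (∀ γ ρ : Γ, b (γ * ρ) = b γ + π γ (b ρ)) →
      (∀ d ∈ Δ, b d = 0) →
      ∃ ξ : H, ∀ l ∈ Λ, b l = ξ - π l ξ :=
  stmt2_general Γ Δ Λ hbdd
end

section
/- Let Γ be a countable group and Δ ≤ Λ ≤ Γ nested subgroups. Suppose that for every unitary representation (π, H) of Γ, every Δ-trivial cocycle b for π restricts on Λ to a coboundary (there exists ξ ∈ H with b(λ) = ξ − π(λ)ξ for all λ ∈ Λ). Then the triple Δ ≤ Λ ≤ Γ has property (T). -/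
open scoped InnerProductSpace ComplexConjugate ComplexOrder BigOperators

set_option linter.unusedVariables false

open scoped ENNReal in
section

noncomputable section Aux

variable {H : Type} [NormedAddCommGroup H] [InnerProductSpace ℂ H]

lemma memLp_map (u : H ≃ₗᵢ[ℂ] H) (f : lp (fun _ : ℕ => H) 2) :
    Memℓp (fun n => u (f n)) 2 := by
  have h2 : (0:ℝ) < (2:ℝ≥0∞).toReal := by norm_num
  have h := (memℓp_gen_iff h2).1 (lp.memℓp f)
  exact memℓp_gen (by simpa using h)

def lpMapFun (u : H ≃ₗᵢ[ℂ] H) (f : lp (fun _ : ℕ => H) 2) : lp (fun _ : ℕ => H) 2 :=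
  ⟨fun n => u (f n), memLp_map u f⟩

@[simp] lemma lpMapFun_apply (u : H ≃ₗᵢ[ℂ] H) (f : lp (fun _ : ℕ => H) 2) (n : ℕ) :
    (lpMapFun u f : ∀ _ : ℕ, H) n = u (f n) := rfl

def lpMap (u : H ≃ₗᵢ[ℂ] H) : lp (fun _ : ℕ => H) 2 ≃ₗᵢ[ℂ] lp (fun _ : ℕ => H) 2 where
  toFun := lpMapFun u
  invFun := lpMapFun u.symm
  left_inv f := by apply lp.ext; funext n; simp
  right_inv f := by apply lp.ext; funext n; simp
  map_add' f g := by apply lp.ext; funext n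
                     simp [lp.coeFn_add, Pi.add_apply]
  map_smul' c f := by apply lp.ext; funext n
                      simp [lp.coeFn_smul, Pi.smul_apply]
  norm_map' f := by
    have h2 : (0:ℝ) < (2:ℝ≥0∞).toReal := by norm_num
    rw [lp.norm_eq_tsum_rpow h2, lp.norm_eq_tsum_rpow h2]
    congr 1
    apply tsum_congr; intro n
    show ‖u (f n)‖ ^ _ = _
    rw [u.norm_map]

@[simp] lemma lpMap_apply (u : H ≃ₗᵢ[ℂ] H) (f : lp (fun _ : ℕ => H) 2) (n : ℕ) :
    (lpMap u f : ∀ _ : ℕ, H) n = u (f n) := rfl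

variable {Γ : Type} [Group Γ]

def lpRep (π : Γ →* (H ≃ₗᵢ[ℂ] H)) :
    Γ →* ((lp (fun _ : ℕ => H) 2) ≃ₗᵢ[ℂ] (lp (fun _ : ℕ => H) 2)) where
  toFun γ := lpMap (π γ)
  map_one' := by
    apply LinearIsometryEquiv.ext; intro f; apply lp.ext; funext n; simp
  map_mul' γ ρ := by
    apply LinearIsometryEquiv.ext; intro f; apply lp.ext; funext n
    show (π (γ * ρ)) (f n) = (π γ) ((π ρ) (f n))
    simp

end Aux

theorem stmt3' (Γ : Type) [Group Γ] [Countable Γ] (Δ Λ : Subgroup Γ) (hΔΛ : Δ ≤ Λ)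
    (hcob : ∀ (H : Type) [NormedAddCommGroup H] [InnerProductSpace ℂ H] [CompleteSpace H]
      (π : Γ →* (H ≃ₗᵢ[ℂ] H)) (b : Γ → H),
      (∀ γ ρ : Γ, b (γ * ρ) = b γ + π γ (b ρ)) →
      (∀ d ∈ Δ, b d = 0) →
      ∃ ξ : H, ∀ l ∈ Λ, b l = ξ - π l ξ) :
    ∀ (H : Type) [NormedAddCommGroup H] [InnerProductSpace ℂ H] [CompleteSpace H]
    (π : Γ →* (H ≃ₗᵢ[ℂ] H)),
    (∀ (F : Finset Γ) (ε : ℝ), 0 < ε →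
      ∃ ξ : H, ‖ξ‖ = 1 ∧ (∀ d ∈ Δ, π d ξ = ξ) ∧ ∀ γ ∈ F, ‖π γ ξ - ξ‖ ≤ ε) →
    ∃ η : H, ‖η‖ = 1 ∧ ∀ l ∈ Λ, π l η = η := by
  intro H _ _ _ π hai
  classical
  obtain ⟨e, he⟩ := exists_surjective_nat Γ
  have hsel : ∀ n : ℕ, ∃ ξ : H, ‖ξ‖ = 1 ∧ (∀ d ∈ Δ, π d ξ = ξ) ∧
      ∀ γ ∈ Finset.image e (Finset.range (n+1)),
        ‖π γ ξ - ξ‖ ≤ (1/2:ℝ)^n / ((n:ℝ)+1) := by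
    intro n
    exact hai _ _ (by positivity)
  choose ξ hξ1 hξΔ hξF using hsel
  set c : ℕ → ℂ := fun n => ((n+1 : ℕ) : ℂ) with hc
  have hcne : ∀ n, c n ≠ 0 := fun n => Nat.cast_ne_zero.2 (Nat.succ_ne_zero n)
  have hcnorm : ∀ n, ‖c n‖ = (n:ℝ)+1 := by
    intro n
    show ‖((n+1:ℕ):ℂ)‖ = (n:ℝ)+1
    rw [show ((n+1:ℕ):ℂ) = (((n:ℝ)+1 : ℝ) : ℂ) by push_cast; ring]
    rw [Complex.norm_real, Real.norm_eq_abs, abs_of_pos (by positivity)]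
  set v : Γ → ∀ _ : ℕ, H := fun γ n => c n • (π γ (ξ n) - ξ n) with hv
  -- key norm bound
  have hbound : ∀ (k n : ℕ), k ≤ n → ‖v (e k) n‖ ≤ (1/2:ℝ)^n := by
    intro k n hkn
    have hmem : e k ∈ Finset.image e (Finset.range (n+1)) :=
      Finset.mem_image_of_mem e (Finset.mem_range.2 (Nat.lt_succ_of_le hkn))
    have h1 := hξF n (e k) hmem
    have : ‖v (e k) n‖ = ((n:ℝ)+1) * ‖π (e k) (ξ n) - ξ n‖ := by
      rw [hv]; simp only [norm_smul, hcnorm]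
    rw [this]
    have hpos : (0:ℝ) < (n:ℝ)+1 := by positivity
    calc ((n:ℝ)+1) * ‖π (e k) (ξ n) - ξ n‖
        ≤ ((n:ℝ)+1) * ((1/2:ℝ)^n / ((n:ℝ)+1)) := by
          exact mul_le_mul_of_nonneg_left h1 (le_of_lt hpos)
      _ = (1/2:ℝ)^n := by rw [mul_comm, div_mul_cancel₀ _ (ne_of_gt hpos)]
  have hmemv : ∀ γ, Memℓp (v γ) 2 := by
    intro γ
    obtain ⟨k, hk⟩ := he γ
    apply memℓp_gen
    have h2 : ((2:ℝ≥0∞).toReal) = 2 := by norm_num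
    rw [h2]
    rw [← summable_nat_add_iff k]
    have hg : Summable (fun n : ℕ => ((1/4:ℝ))^(n+k)) :=
      ((summable_nat_add_iff k).2 (summable_geometric_of_lt_one (by norm_num) (by norm_num)))
    apply Summable.of_nonneg_of_le (fun n => by positivity) _ hg
    intro n
    have hb := hbound k (n+k) (Nat.le_add_left k n)
    rw [hk] at hb
    have hnn : (0:ℝ) ≤ ‖v γ (n+k)‖ := norm_nonneg _
    calc ‖v γ (n+k)‖ ^ (2:ℝ) = ‖v γ (n+k)‖ ^ (2:ℕ) := by
          rw [← Real.rpow_natCast]; norm_num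
      _ ≤ ((1/2:ℝ)^(n+k)) ^ (2:ℕ) := by
          apply pow_le_pow_left₀ hnn hb
      _ = (1/4:ℝ)^(n+k) := by rw [← pow_mul, pow_mul']; norm_num
  set b : Γ → lp (fun _ : ℕ => H) 2 := fun γ => ⟨v γ, hmemv γ⟩ with hb
  have hbapp : ∀ γ n, (b γ : ∀ _ : ℕ, H) n = c n • (π γ (ξ n) - ξ n) := fun γ n => rfl
  have hcoc : ∀ γ ρ : Γ, b (γ * ρ) = b γ + (lpRep π) γ (b ρ) := by
    intro γ ρ
    apply lp.ext; funext n
    rw [lp.coeFn_add]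
    show v (γ * ρ) n = v γ n + (π γ) (v ρ n)
    rw [hv]
    simp only [map_mul]
    show c n • ((π γ) ((π ρ) (ξ n)) - ξ n) =
      c n • ((π γ) (ξ n) - ξ n) + (π γ) (c n • ((π ρ) (ξ n) - ξ n))
    rw [map_smul, map_sub, smul_sub, smul_sub, smul_sub]
    abel
  have htriv : ∀ d ∈ Δ, b d = 0 := by
    intro d hd
    apply lp.ext; funext n
    show v d n = (0 : lp (fun _ : ℕ => H) 2) n
    rw [hv]
    simp [hξΔ n d hd]
  obtain ⟨ζ, hζ⟩ := hcob (lp (fun _ : ℕ => H) 2) (lpRep π) b hcoc htriv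
  -- componentwise coboundary equation
  have hcomp : ∀ l ∈ Λ, ∀ n, c n • (π l (ξ n) - ξ n) = ζ n - π l (ζ n) := by
    intro l hl n
    have h0 : (b l : ∀ _ : ℕ, H) n = ((ζ - (lpRep π) l ζ : lp (fun _ : ℕ => H) 2) : ∀ _ : ℕ, H) n := by
      rw [hζ l hl]
    rw [lp.coeFn_sub, Pi.sub_apply] at h0
    exact h0
  -- choose n large
  obtain ⟨m, hm⟩ := exists_nat_gt ‖ζ‖
  have hmlt : ‖ζ‖ < (m:ℝ)+1 := by linarith
  set η₀ : H := ξ m + (c m)⁻¹ • ζ m with hη₀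
  have hinv : ∀ l ∈ Λ, π l η₀ = η₀ := by
    intro l hl
    have h2 : π l (ξ m) - ξ m = (c m)⁻¹ • (ζ m - π l (ζ m)) := by
      rw [← hcomp l hl m, inv_smul_smul₀ (hcne m)]
    have h3 : π l (ξ m) = ξ m + (c m)⁻¹ • (ζ m - π l (ζ m)) := by
      rw [← h2]; abel
    rw [hη₀, map_add, map_smul, h3, smul_sub]
    abel
  have hζmle : ‖ζ m‖ ≤ ‖ζ‖ := lp.norm_apply_le_norm (by norm_num) ζ m
  have hsmall : ‖(c m)⁻¹ • ζ m‖ < 1 := by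
    rw [norm_smul, norm_inv, hcnorm]
    have hpos : (0:ℝ) < (m:ℝ)+1 := by positivity
    rw [inv_mul_lt_iff₀ hpos, mul_one]
    exact lt_of_le_of_lt hζmle hmlt
  have hη₀pos : 0 < ‖η₀‖ := by
    have h1 : ‖ξ m‖ ≤ ‖η₀‖ + ‖(c m)⁻¹ • ζ m‖ := by
      have : ξ m = η₀ - (c m)⁻¹ • ζ m := by rw [hη₀]; abel
      rw [this]
      exact norm_sub_le _ _
    rw [hξ1 m] at h1
    linarith
  refine ⟨((‖η₀‖ : ℂ))⁻¹ • η₀, ?_, ?_⟩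
  · rw [norm_smul, norm_inv]
    have : ‖((‖η₀‖ : ℝ) : ℂ)‖ = ‖η₀‖ := by
      rw [Complex.norm_real, Real.norm_eq_abs, abs_of_pos hη₀pos]
    rw [this, inv_mul_cancel₀ (ne_of_gt hη₀pos)]
  · intro l hl
    rw [map_smul, hinv l hl]

end

/-- If for every unitary representation of Γ every Δ-trivial cocycle
restricts to a coboundary on Λ, then the triple Δ ≤ Λ ≤ Γ has property (T). -/
theorem stmt3 (Γ : Type) [Group Γ] [Countable Γ] (Δ Λ : Subgroup Γ) (hΔΛ : Δ ≤ Λ)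
    (hcob : ∀ (H : Type) [NormedAddCommGroup H] [InnerProductSpace ℂ H] [CompleteSpace H]
      (π : Γ →* (H ≃ₗᵢ[ℂ] H)) (b : Γ → H),
      (∀ γ ρ : Γ, b (γ * ρ) = b γ + π γ (b ρ)) →
      (∀ d ∈ Δ, b d = 0) →
      ∃ ξ : H, ∀ l ∈ Λ, b l = ξ - π l ξ) :
    HasPropertyT Δ Λ :=
  stmt3' Γ Δ Λ hΔΛ hcob
end

section
/- Let Γ be a countable group and Δ ≤ Λ ≤ Γ nested subgroups. Suppose that every Δ-invariant real-valued function of conditionally negative type on Γ is bounded on Λ. Then for every ε > 0 there exist a finite subset F ⊆ Γ and δ > 0 such that every normalized Δ-invariant function of positive type φ : Γ → ℂ satisfying |φ(t) − 1| ≤ δ for all t ∈ F satisfies Re(1 − φ(γ)) ≤ ε for all γ ∈ Λ. -/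
open scoped InnerProductSpace ComplexConjugate ComplexOrder BigOperators

/-!
Suppose the conclusion fails for some `ε > 0`. Enumerating `Γ`, for each `n` there is a normalized
`Δ`-invariant `φₙ` of positive type with `‖φₙ - 1‖ ≤ 2⁻ⁿ` on the first `n` elements of `Γ`, and
some `gₙ ∈ Λ` with `Re (1 - φₙ gₙ) > ε`. Each `Re (1 - φₙ)` is `Δ`-invariant of conditionally
negative type and, at every point, eventually at most `2⁻ⁿ`; hence `ψ = ∑ₙ n • Re (1 - φₙ)`
converges and is again of conditionally negative type. But `ψ gₙ ≥ n ε`, so `ψ` is unbounded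
on `Λ`.
-/

open Filter

section

variable {Γ : Type} [Group Γ]

namespace IsPosType

variable {φ : Γ → ℂ}

lemma two_point_nonneg (h : IsPosType φ) (g : Γ) (c₀ c₁ : ℂ) :
    0 ≤ conj c₀ * c₀ * φ 1 + conj c₀ * c₁ * φ g + conj c₁ * c₀ * φ g⁻¹ + conj c₁ * c₁ * φ 1 := by
  simpa [Fin.sum_univ_two, add_assoc] using h 2 one_le_two ![1, g] ![c₀, c₁]

lemma map_inv (h : IsPosType φ) (g : Γ) : φ g⁻¹ = conj (φ g) := by
  have h₀ := (Complex.le_def.mp (h.two_point_nonneg g 1 0)).2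
  have h₁ := (Complex.le_def.mp (h.two_point_nonneg g 1 1)).2
  have h₂ := (Complex.le_def.mp (h.two_point_nonneg g 1 Complex.I)).2
  simp at h₀ h₁ h₂
  apply Complex.ext <;> simp <;> linarith

lemma isRealCondNegType_re_sub (h : IsPosType φ) :
    IsRealCondNegType fun x => (φ 1 - φ x).re := by
  refine ⟨by simp, fun x => by simp [h.map_inv], fun n hn γ c hc => ?_⟩
  have hre := (Complex.le_def.mp (h n (by omega) γ fun i => c i)).1
  have hsplit : ∑ i, ∑ j, c i * c j * (φ 1 - φ ((γ i)⁻¹ * γ j)).re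
      = -(∑ i, ∑ j, conj (c i : ℂ) * c j * φ ((γ i)⁻¹ * γ j)).re := by
    simp only [Complex.re_sum, Complex.sub_re, Complex.conj_ofReal, ← Complex.ofReal_mul,
      Complex.re_ofReal_mul, mul_sub, Finset.sum_sub_distrib, ← Finset.mul_sum, ← Finset.sum_mul,
      hc, zero_mul, zero_sub]
  simp only [Complex.zero_re] at hre
  linarith

end IsPosType

namespace IsRealCondNegType

variable {ψ : Γ → ℝ}

lemma nonneg (h : IsRealCondNegType ψ) (x : Γ) : 0 ≤ ψ x := by
  have := h.2.2 2 le_rfl ![1, x] ![1, -1] (by simp)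
  simp [Fin.sum_univ_two, h.1, h.2.1] at this
  linarith

lemma const_mul (h : IsRealCondNegType ψ) {a : ℝ} (ha : 0 ≤ a) :
    IsRealCondNegType fun x => a * ψ x := by
  refine ⟨by simp [h.1], fun x => by simp [h.2.1], fun n hn γ c hc => ?_⟩
  calc ∑ i, ∑ j, c i * c j * (a * ψ ((γ i)⁻¹ * γ j))
      = a * ∑ i, ∑ j, c i * c j * ψ ((γ i)⁻¹ * γ j) := by
        simp only [Finset.mul_sum]; congr! 2; ring
    _ ≤ 0 := mul_nonpos_of_nonneg_of_nonpos ha (h.2.2 n hn γ c hc)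

lemma tsum {ψ : ℕ → Γ → ℝ} (h : ∀ k, IsRealCondNegType (ψ k))
    (hs : ∀ x, Summable fun k => ψ k x) : IsRealCondNegType fun x => ∑' k, ψ k x := by
  refine ⟨by simp [(h _).1], fun x => by simp [(h _).2.1], fun n hn γ c hc => ?_⟩
  calc ∑ i, ∑ j, c i * c j * ∑' k, ψ k ((γ i)⁻¹ * γ j)
      = ∑' k, ∑ i, ∑ j, c i * c j * ψ k ((γ i)⁻¹ * γ j) := by
        rw [Summable.tsum_finsetSum fun i _ => summable_sum fun j _ => (hs _).mul_left _]
        refine Finset.sum_congr rfl fun i _ => ?_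
        rw [Summable.tsum_finsetSum fun j _ => (hs _).mul_left _]
        simp only [tsum_mul_left]
    _ ≤ 0 := tsum_nonpos fun k => (h k).2.2 n hn γ c hc

end IsRealCondNegType

end

lemma summable_natCast_mul_of_eventually_le_half_pow {a : ℕ → ℝ} (h₀ : ∀ n, 0 ≤ a n)
    (h : ∀ᶠ n in atTop, a n ≤ (1 / 2) ^ n) : Summable fun n : ℕ => n * a n := by
  refine Summable.of_norm_bounded_eventually_nat
    (summable_pow_mul_geometric_of_norm_lt_one 1 (r := (1 / 2 : ℝ)) (by norm_num)) ?_
  filter_upwards [h] with n hn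
  rw [Real.norm_of_nonneg (mul_nonneg n.cast_nonneg (h₀ n)), pow_one]
  exact mul_le_mul_of_nonneg_left hn n.cast_nonneg

theorem stmt4_general (Γ : Type) [Group Γ] [Countable Γ] (Δ Λ : Subgroup Γ)
    (hbdd : ∀ ψ : Γ → ℝ, IsRealCondNegType ψ → IsInvariantUnder Δ ψ →
      ∃ C : ℝ, ∀ l ∈ Λ, |ψ l| ≤ C) :
    ∀ ε > (0 : ℝ), ∃ (F : Finset Γ) (δ : ℝ), 0 < δ ∧
      ∀ φ : Γ → ℂ, IsPosType φ → φ 1 = 1 → IsInvariantUnder Δ φ →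
        (∀ t ∈ F, ‖φ t - 1‖ ≤ δ) →
        ∀ γ ∈ Λ, (1 - φ γ).re ≤ ε := by
  classical
  by_contra! ⟨ε, hε, hcon⟩
  obtain ⟨e, he⟩ := exists_surjective_nat Γ
  choose φ hpos hone hinv hF g hgΛ hgε using
    fun n : ℕ => hcon ((Finset.range n).image e) ((1 / 2) ^ n) (by positivity)
  set f : ℕ → Γ → ℝ := fun n x => (1 - φ n x).re
  have hf : ∀ n, IsRealCondNegType (f n) := fun n => by
    simpa only [hone n] using (hpos n).isRealCondNegType_re_sub
  have hf_small (x : Γ) : ∀ᶠ n in atTop, f n x ≤ (1 / 2) ^ n := by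
    obtain ⟨m, rfl⟩ := he x
    filter_upwards [eventually_gt_atTop m] with n hn
    refine (Complex.re_le_norm _).trans ?_
    rw [norm_sub_rev]
    exact hF n _ (Finset.mem_image_of_mem e (Finset.mem_range.2 hn))
  set ψ : Γ → ℝ := fun x => ∑' n : ℕ, n * f n x
  have hsum (x : Γ) : Summable fun n : ℕ => n * f n x :=
    summable_natCast_mul_of_eventually_le_half_pow (fun n => (hf n).nonneg x) (hf_small x)
  have hψ : IsRealCondNegType ψ :=
    IsRealCondNegType.tsum (fun n => (hf n).const_mul n.cast_nonneg) hsum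
  have hψ_inv : IsInvariantUnder Δ ψ := fun d₀ hd₀ d₁ hd₁ x =>
    tsum_congr fun n => by simp only [f, hinv n d₀ hd₀ d₁ hd₁ x]
  obtain ⟨C, hC⟩ := hbdd ψ hψ hψ_inv
  obtain ⟨n, hn⟩ := exists_nat_gt (C / ε)
  have hlower : n * ε ≤ ψ (g n) :=
    calc n * ε ≤ n * f n (g n) := by gcongr; exact (hgε n).le
      _ ≤ ψ (g n) := (hsum (g n)).le_tsum n fun k _ => mul_nonneg k.cast_nonneg ((hf k).nonneg _)
  linarith [hC (g n) (hgΛ n), le_abs_self (ψ (g n)), (div_lt_iff₀ hε).1 hn]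

/-- If every Δ-invariant real-valued function of conditionally negative type
on Γ is bounded on Λ, then for every ε > 0 there is a pair (F, δ) such that any normalized
Δ-invariant function of positive type close to 1 on F is uniformly close to 1 on Λ. -/
theorem stmt4 (Γ : Type) [Group Γ] [Countable Γ] (Δ Λ : Subgroup Γ) (hΔΛ : Δ ≤ Λ)
    (hbdd : ∀ ψ : Γ → ℝ, IsRealCondNegType ψ → IsInvariantUnder Δ ψ →
      ∃ C : ℝ, ∀ l ∈ Λ, |ψ l| ≤ C) :
    ∀ ε > (0 : ℝ), ∃ (F : Finset Γ) (δ : ℝ), 0 < δ ∧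
      ∀ φ : Γ → ℂ, IsPosType φ → φ 1 = 1 → IsInvariantUnder Δ φ →
        (∀ t ∈ F, ‖φ t - 1‖ ≤ δ) →
        ∀ γ ∈ Λ, (1 - φ γ).re ≤ ε :=
  stmt4_general Γ Δ Λ hbdd
end

section
/- Let Γ be a group and Δ ≤ Λ ≤ Γ nested subgroups. Suppose that for every ε' > 0 there exist a finite subset F' ⊆ Γ and δ' > 0 such that every normalized Δ-invariant function of positive type φ : Γ → ℂ with |φ(t) − 1| ≤ δ' for all t ∈ F' satisfies Re(1 − φ(γ)) ≤ ε' for all γ ∈ Λ. Then for every ε > 0 there exist a finite subset F ⊆ Γ and δ > 0 such that for every unitary representation (π, H) of Γ and every Δ-invariant (F,δ)-invariant unit vector ξ ∈ H there exists a Λ-invariant vector η ∈ H with ‖ξ − η‖ ≤ ε. -/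
/-!
The diagonal matrix coefficient `φ(γ) = ⟪ξ, π(γ) ξ⟫` of a Δ-invariant unit vector `ξ` is a
normalized Δ-invariant function of positive type, close to `1` on `F` when `ξ` is almost
invariant on `F`. Since `‖π(γ) ξ - ξ‖² = 2 Re (1 - φ(γ))`, the hypothesis puts the whole
`Λ`-orbit of `ξ` in the ball of radius `ε` around `ξ`. The closed convex hull of the orbit is
then a `Λ`-invariant closed convex subset of that ball. As each `π(l)` preserves both this set
and the norm, the unique point of minimal norm of the set is the required `Λ`-invariant `η`.
-/

open scoped InnerProductSpace ComplexConjugate ComplexOrder BigOperators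

open Set

section MinimalNorm

variable {E : Type*} [NormedAddCommGroup E]

theorem Convex.eq_of_isMinOn_norm [NormedSpace ℝ E] [StrictConvexSpace ℝ E] {C : Set E}
    (hC : Convex ℝ C) {x y : E} (hx : x ∈ C) (hy : y ∈ C) (hmin : IsMinOn norm C x)
    (hxy : ‖y‖ = ‖x‖) : y = x := by
  by_contra hne
  have hmid : (1 / 2 : ℝ) • (x + y) ∈ C := by
    rw [smul_add]
    exact hC hx hy (by norm_num) (by norm_num) (by norm_num)
  exact (hmin hmid).not_gt ((norm_midpoint_lt_iff hxy.symm).2 (Ne.symm hne))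

variable [InnerProductSpace ℝ E] [CompleteSpace E]

theorem IsClosed.exists_isMinOn_norm {C : Set E} (hne : C.Nonempty) (hclosed : IsClosed C)
    (hconv : Convex ℝ C) : ∃ x ∈ C, IsMinOn norm C x := by
  obtain ⟨x, hx, hinf⟩ := exists_norm_eq_iInf_of_complete_convex hne hclosed.isComplete hconv 0
  simp only [zero_sub, norm_neg] at hinf
  refine ⟨x, hx, fun y hy => ?_⟩
  show ‖x‖ ≤ ‖y‖
  rw [hinf]
  exact ciInf_le ⟨0, forall_mem_range.2 fun _ => norm_nonneg _⟩ (⟨y, hy⟩ : C)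

theorem IsClosed.exists_mem_forall_eq_of_mapsTo {C : Set E} (hne : C.Nonempty)
    (hclosed : IsClosed C) (hconv : Convex ℝ C) {ι : Type*} (f : ι → E → E)
    (hnorm : ∀ i x, ‖f i x‖ = ‖x‖) (hf : ∀ i, MapsTo (f i) C C) :
    ∃ x ∈ C, ∀ i, f i x = x := by
  obtain ⟨x, hx, hmin⟩ := hclosed.exists_isMinOn_norm hne hconv
  exact ⟨x, hx, fun i => hconv.eq_of_isMinOn_norm hx (hf i hx) hmin (hnorm i x)⟩

end MinimalNorm

theorem Set.MapsTo.closure_convexHull {𝕜 E F : Type*} [Field 𝕜] [PartialOrder 𝕜]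
    [AddCommGroup E] [Module 𝕜 E] [TopologicalSpace E] [AddCommGroup F] [Module 𝕜 F]
    [TopologicalSpace F] {f : E →ₗ[𝕜] F} (hf : Continuous f) {s : Set E} {t : Set F}
    (h : MapsTo f s t) : MapsTo f (closure (convexHull 𝕜 s)) (closure (convexHull 𝕜 t)) := by
  refine MapsTo.closure (fun x hx => ?_) hf
  have : f x ∈ f '' convexHull 𝕜 s := mem_image_of_mem f hx
  rw [f.image_convexHull] at this
  exact convexHull_mono h.image_subset this

theorem sum_sum_conj_mul_inner_nonneg {ι H : Type*} [Fintype ι] [NormedAddCommGroup H]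
    [InnerProductSpace ℂ H] (v : ι → H) (c : ι → ℂ) :
    0 ≤ ∑ i, ∑ j, conj (c i) * c j * ⟪v i, v j⟫_ℂ := by
  have h := (Matrix.posSemidef_gram ℂ v).dotProduct_mulVec_nonneg c
  rw [Matrix.star_dotProduct_gram_mulVec] at h
  convert h using 1
  simp_rw [sum_inner, inner_sum, inner_smul_left, inner_smul_right, mul_assoc]

section MatrixCoeff

variable {Γ : Type} [Group Γ] {H : Type*} [NormedAddCommGroup H] [InnerProductSpace ℂ H]

noncomputable def matrixCoeff (π : Γ →* (H ≃ₗᵢ[ℂ] H)) (ξ : H) (γ : Γ) : ℂ := ⟪ξ, π γ ξ⟫_ℂ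

variable (π : Γ →* (H ≃ₗᵢ[ℂ] H)) (ξ : H)

theorem matrixCoeff_inv_mul (a b : Γ) : matrixCoeff π ξ (a⁻¹ * b) = ⟪π a ξ, π b ξ⟫_ℂ := by
  rw [matrixCoeff, ← (π a).inner_map_map, ← Function.comp_apply (f := π a),
    ← LinearIsometryEquiv.coe_mul, ← map_mul, mul_inv_cancel_left]

theorem isPosType_matrixCoeff : IsPosType (matrixCoeff π ξ) := fun _ _ γ c => by
  simpa only [matrixCoeff_inv_mul] using sum_sum_conj_mul_inner_nonneg (fun i => π (γ i) ξ) c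

theorem matrixCoeff_one : matrixCoeff π ξ 1 = ((‖ξ‖ ^ 2 : ℝ) : ℂ) := by
  simp [matrixCoeff, inner_self_eq_norm_sq_to_K]

theorem norm_matrixCoeff_sub_matrixCoeff_one_le (γ : Γ) :
    ‖matrixCoeff π ξ γ - matrixCoeff π ξ 1‖ ≤ ‖ξ‖ * ‖π γ ξ - ξ‖ := by
  have : matrixCoeff π ξ γ - matrixCoeff π ξ 1 = ⟪ξ, π γ ξ - ξ⟫_ℂ := by
    simp [matrixCoeff]
  rw [this]
  exact norm_inner_le_norm _ _

theorem norm_map_sub_self_sq (γ : Γ) :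
    ‖π γ ξ - ξ‖ ^ 2 = 2 * (matrixCoeff π ξ 1 - matrixCoeff π ξ γ).re := by
  rw [@norm_sub_sq ℂ, inner_re_symm, (π γ).norm_map, matrixCoeff_one, Complex.sub_re,
    Complex.ofReal_re, matrixCoeff, RCLike.re_to_complex]
  ring

variable {π ξ} in
theorem isInvariantUnder_matrixCoeff {Δ : Subgroup Γ} (hξ : ∀ d ∈ Δ, π d ξ = ξ) :
    IsInvariantUnder Δ (matrixCoeff π ξ) := fun d₀ hd₀ d₁ hd₁ γ => by
  simp only [matrixCoeff, map_mul, LinearIsometryEquiv.coe_mul, Function.comp_apply, hξ d₁ hd₁]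
  simpa only [hξ d₀ hd₀] using (π d₀).inner_map_map ξ (π γ ξ)

end MatrixCoeff

theorem exists_forall_map_eq_of_forall_norm_map_sub_le {Γ H : Type*} [Group Γ]
    [NormedAddCommGroup H] [InnerProductSpace ℂ H] [CompleteSpace H]
    (π : Γ →* (H ≃ₗᵢ[ℂ] H)) (Λ : Subgroup Γ) {ξ : H} {ε : ℝ}
    (h : ∀ l ∈ Λ, ‖π l ξ - ξ‖ ≤ ε) : ∃ η : H, (∀ l ∈ Λ, π l η = η) ∧ ‖ξ - η‖ ≤ ε := by
  let _ : InnerProductSpace ℝ H := InnerProductSpace.complexToReal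
  set C := closure (convexHull ℝ (range fun l : Λ => π l ξ))
  have hξC : ξ ∈ C := subset_closure (subset_convexHull ℝ _ ⟨1, by simp⟩)
  have hCball : C ⊆ Metric.closedBall ξ ε :=
    closure_minimal (convexHull_min (range_subset_iff.2 fun l => mem_closedBall_iff_norm.2
      (h l l.2)) (convex_closedBall ξ ε)) Metric.isClosed_closedBall
  have hmaps : ∀ l : Λ, MapsTo (π l) C C := fun l =>
    MapsTo.closure_convexHull (f := (π l).toLinearEquiv.toLinearMap.restrictScalars ℝ)
      (π l).continuous (by rintro _ ⟨m, rfl⟩; exact ⟨l * m, by simp [LinearIsometryEquiv.coe_mul]⟩)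
  obtain ⟨η, hηC, hη⟩ := isClosed_closure.exists_mem_forall_eq_of_mapsTo ⟨ξ, hξC⟩
    (convex_convexHull ℝ _).closure (fun l : Λ => π l) (fun l => (π l).norm_map) hmaps
  exact ⟨η, fun l hl => hη ⟨l, hl⟩, mem_closedBall_iff_norm'.1 (hCball hηC)⟩

theorem stmt5_general (Γ : Type) [Group Γ] (Δ Λ : Subgroup Γ)
    (hyp : ∀ ε' > (0 : ℝ), ∃ (F' : Finset Γ) (δ' : ℝ), 0 < δ' ∧
      ∀ φ : Γ → ℂ, IsPosType φ → φ 1 = 1 → IsInvariantUnder Δ φ →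
        (∀ t ∈ F', ‖φ t - 1‖ ≤ δ') →
        ∀ γ ∈ Λ, (1 - φ γ).re ≤ ε') :
    ∀ ε > (0 : ℝ), ∃ (F : Finset Γ) (δ : ℝ), 0 < δ ∧
      ∀ (H : Type) [NormedAddCommGroup H] [InnerProductSpace ℂ H] [CompleteSpace H]
        (π : Γ →* (H ≃ₗᵢ[ℂ] H)) (ξ : H),
        ‖ξ‖ = 1 → (∀ d ∈ Δ, π d ξ = ξ) → (∀ γ ∈ F, ‖π γ ξ - ξ‖ ≤ δ) →
        ∃ η : H, (∀ l ∈ Λ, π l η = η) ∧ ‖ξ - η‖ ≤ ε := by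
  intro ε hε
  obtain ⟨F, δ, hδ, hφ⟩ := hyp (ε ^ 2 / 2) (by positivity)
  refine ⟨F, δ, hδ, fun H _ _ _ π ξ hξ hΔξ hFξ =>
    exists_forall_map_eq_of_forall_norm_map_sub_le π Λ fun l hl => ?_⟩
  have hφ1 : matrixCoeff π ξ 1 = 1 := by rw [matrixCoeff_one, hξ]; norm_num
  have hφF : ∀ t ∈ F, ‖matrixCoeff π ξ t - 1‖ ≤ δ := fun t ht =>
    calc ‖matrixCoeff π ξ t - 1‖ = ‖matrixCoeff π ξ t - matrixCoeff π ξ 1‖ := by rw [hφ1]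
      _ ≤ ‖ξ‖ * ‖π t ξ - ξ‖ := norm_matrixCoeff_sub_matrixCoeff_one_le π ξ t
      _ ≤ δ := by rw [hξ, one_mul]; exact hFξ t ht
  have hre := hφ _ (isPosType_matrixCoeff π ξ) hφ1 (isInvariantUnder_matrixCoeff hΔξ) hφF l hl
  have hsq : ‖π l ξ - ξ‖ ^ 2 ≤ ε ^ 2 := by rw [norm_map_sub_self_sq, hφ1]; linarith
  exact (pow_le_pow_iff_left₀ (norm_nonneg _) hε.le two_ne_zero).1 hsq

/-- If normalized Δ-invariant positive type functions close to 1 on a suitable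
finite set are uniformly close to 1 on Λ, then almost-invariant Δ-invariant unit vectors of
unitary representations are close to Λ-invariant vectors. -/
theorem stmt5 (Γ : Type) [Group Γ] (Δ Λ : Subgroup Γ) (hΔΛ : Δ ≤ Λ)
    (hyp : ∀ ε' > (0 : ℝ), ∃ (F' : Finset Γ) (δ' : ℝ), 0 < δ' ∧
      ∀ φ : Γ → ℂ, IsPosType φ → φ 1 = 1 → IsInvariantUnder Δ φ →
        (∀ t ∈ F', ‖φ t - 1‖ ≤ δ') →
        ∀ γ ∈ Λ, (1 - φ γ).re ≤ ε') :
    ∀ ε > (0 : ℝ), ∃ (F : Finset Γ) (δ : ℝ), 0 < δ ∧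
      ∀ (H : Type) [NormedAddCommGroup H] [InnerProductSpace ℂ H] [CompleteSpace H]
        (π : Γ →* (H ≃ₗᵢ[ℂ] H)) (ξ : H),
        ‖ξ‖ = 1 → (∀ d ∈ Δ, π d ξ = ξ) → (∀ γ ∈ F, ‖π γ ξ - ξ‖ ≤ δ) →
        ∃ η : H, (∀ l ∈ Λ, π l η = η) ∧ ‖ξ - η‖ ≤ ε :=
  stmt5_general Γ Δ Λ hyp
end

section
/- Let Γ be a group, Λ ≤ Γ a subgroup, and ψ : Γ → ℝ a function of conditionally negative type such that ψ(λ) ≤ c for all λ ∈ Λ, for some c > 0. Let t > 0 and let (π, H) be a unitary representation of Γ with a unit vector ξ ∈ H satisfying ⟨ξ, π(γ)ξ⟩ = exp(−t ψ(γ)) for all γ ∈ Γ. Then there exists a unit vector η ∈ H with π(λ)η = η for all λ ∈ Λ; indeed, every element ζ of the closed convex hull of {π(λ)ξ : λ ∈ Λ} satisfies ‖ζ‖² ≥ exp(−tc), and the element of minimal norm of this hull is a nonzero Λ-invariant vector. -/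
open scoped InnerProductSpace ComplexConjugate ComplexOrder BigOperators

/-- If ψ is of conditionally negative type and bounded by c on Λ, then the GNS
representation of exp(-tψ) has a Λ-invariant unit vector; indeed every element of the closed
convex hull of the Λ-orbit of ξ has squared norm at least exp(-tc), and the element of minimal
norm is a nonzero Λ-invariant vector. -/
theorem stmt8 (Γ : Type) [Group Γ] (Λ : Subgroup Γ)
    (ψ : Γ → ℝ) (hψ : IsRealCondNegType ψ) (c : ℝ) (hc : 0 < c)
    (hbd : ∀ l ∈ Λ, ψ l ≤ c) (t : ℝ) (ht : 0 < t)
    (H : Type) [NormedAddCommGroup H] [InnerProductSpace ℂ H] [CompleteSpace H]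
    (π : Γ →* (H ≃ₗᵢ[ℂ] H)) (ξ : H) (hξ : ‖ξ‖ = 1)
    (hcorr : ∀ γ : Γ, ⟪ξ, π γ ξ⟫_ℂ = (Real.exp (-t * ψ γ) : ℂ)) :
    (∃ η : H, ‖η‖ = 1 ∧ ∀ l ∈ Λ, π l η = η) ∧
    (∀ ζ ∈ closure (convexHull ℝ ((fun l => π l ξ) '' (Λ : Set Γ))),
      Real.exp (-t * c) ≤ ‖ζ‖ ^ 2) ∧
    (∀ ζ ∈ closure (convexHull ℝ ((fun l => π l ξ) '' (Λ : Set Γ))),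
      (∀ ζ' ∈ closure (convexHull ℝ ((fun l => π l ξ) '' (Λ : Set Γ))), ‖ζ‖ ≤ ‖ζ'‖) →
      ζ ≠ 0 ∧ ∀ l ∈ Λ, π l ζ = ζ) := by
  classical
  letI : InnerProductSpace ℝ H := InnerProductSpace.rclikeToReal ℂ H
  set S : Set H := (fun l => π l ξ) '' (Λ : Set Γ) with hS
  set K : Set H := closure (convexHull ℝ S) with hKdef
  set a : ℝ := Real.exp (-t * c) with ha
  have hcomp : ∀ (l m : Γ) (x : H), π l (π m x) = π (l * m) x := by
    intro l m x; rw [map_mul]; rfl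
  -- inner products on S are ≥ a
  have hinner : ∀ v ∈ S, ∀ w ∈ S, a ≤ (⟪v, w⟫_ℂ).re := by
    rintro _ ⟨l, hl, rfl⟩ _ ⟨m, hm, rfl⟩
    have h1 : (π m) ξ = (π l) ((π (l⁻¹ * m)) ξ) := by
      rw [hcomp, mul_inv_cancel_left]
    have h2 : (⟪(π l) ξ, (π m) ξ⟫_ℂ) = ⟪ξ, (π (l⁻¹ * m)) ξ⟫_ℂ := by
      rw [h1, LinearIsometryEquiv.inner_map_map]
    have hmem : l⁻¹ * m ∈ Λ := mul_mem (inv_mem hl) hm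
    have h3 : (⟪(π l) ξ, (π m) ξ⟫_ℂ).re = Real.exp (-t * ψ (l⁻¹ * m)) := by
      rw [h2, hcorr]; exact Complex.ofReal_re _
    rw [h3, ha]
    exact Real.exp_le_exp.2 (by nlinarith [hbd _ hmem])
  -- half-space principle
  have halfspace : ∀ g : H → ℝ, (∀ x y : H, g (x + y) = g x + g y) →
      (∀ (r : ℝ) (x : H), g (r • x) = r * g x) → Continuous g →
      (∀ w ∈ S, a ≤ g w) → ∀ w ∈ K, a ≤ g w := by
    intro g gadd gsmul gcont hgS
    have hCclosed : IsClosed {w : H | a ≤ g w} := isClosed_le continuous_const gcont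
    have hCconvex : Convex ℝ {w : H | a ≤ g w} := by
      intro x hx y hy s u hs hu hsu
      simp only [Set.mem_setOf_eq] at *
      rw [gadd, gsmul, gsmul]
      have h1 : s * a ≤ s * g x := mul_le_mul_of_nonneg_left hx hs
      have h2 : u * a ≤ u * g y := mul_le_mul_of_nonneg_left hy hu
      have h3 : s * a + u * a = a := by rw [← add_mul, hsu, one_mul]
      linarith
    exact fun w hw => closure_minimal (convexHull_min hgS hCconvex) hCclosed hw
  have hre_add_r : ∀ (v x y : H), (⟪v, x + y⟫_ℂ).re = (⟪v, x⟫_ℂ).re + (⟪v, y⟫_ℂ).re := by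
    intro v x y; rw [inner_add_right]; simp
  have hre_smul_r : ∀ (v : H) (r : ℝ) (x : H), (⟪v, r • x⟫_ℂ).re = r * (⟪v, x⟫_ℂ).re := by
    intro v r x
    rw [← Complex.coe_smul, inner_smul_right]
    simp [Complex.re_ofReal_mul]
  have hcont : ∀ v : H, Continuous fun w : H => (⟪v, w⟫_ℂ).re :=
    fun v => Complex.continuous_re.comp (continuous_const.inner continuous_id)
  -- step 1 : v ∈ S, w ∈ K
  have step1 : ∀ v ∈ S, ∀ w ∈ K, a ≤ (⟪v, w⟫_ℂ).re := by
    intro v hv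
    exact halfspace _ (hre_add_r v) (hre_smul_r v) (hcont v) (hinner v hv)
  -- step 2 : v ∈ K, w ∈ K
  have step2 : ∀ v ∈ K, ∀ w ∈ K, a ≤ (⟪v, w⟫_ℂ).re := by
    intro v hv w hw
    have hsymm : ∀ x y : H, (⟪x, y⟫_ℂ).re = (⟪y, x⟫_ℂ).re := by
      intro x y; rw [← inner_conj_symm x y, Complex.conj_re]
    rw [hsymm]
    refine halfspace (fun u => (⟪w, u⟫_ℂ).re) (hre_add_r w) (hre_smul_r w) (hcont w) ?_ v hv
    intro u hu
    show a ≤ (⟪w, u⟫_ℂ).re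
    rw [hsymm]
    exact step1 u hu w hw
  -- the norm bound
  have hbound : ∀ ζ ∈ K, a ≤ ‖ζ‖ ^ 2 := by
    intro ζ hζ
    have h1 := step2 ζ hζ ζ hζ
    have h2 : (⟪ζ, ζ⟫_ℂ).re = ‖ζ‖ ^ 2 := by
      simpa using inner_self_eq_norm_sq (𝕜 := ℂ) ζ
    rwa [h2] at h1
  have hapos : 0 < a := Real.exp_pos _
  -- Λ-invariance of K
  have hSim : ∀ l ∈ Λ, (fun x : H => π l x) '' S = S := by
    intro l hl
    apply Set.Subset.antisymm
    · rintro _ ⟨_, ⟨m, hm, rfl⟩, rfl⟩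
      exact ⟨l * m, mul_mem hl hm, (hcomp l m ξ).symm⟩
    · rintro _ ⟨m, hm, rfl⟩
      refine ⟨π (l⁻¹ * m) ξ, ⟨l⁻¹ * m, mul_mem (inv_mem hl) hm, rfl⟩, ?_⟩
      show (π l) ((π (l⁻¹ * m)) ξ) = (π m) ξ
      rw [hcomp, mul_inv_cancel_left]
  have hlinmap : ∀ l : Γ, IsLinearMap ℝ (fun x : H => π l x) := by
    intro l
    refine ⟨fun x y => map_add _ x y, fun r x => ?_⟩
    rw [← Complex.coe_smul, map_smul, Complex.coe_smul]
  have hinvK : ∀ l ∈ Λ, ∀ ζ ∈ K, π l ζ ∈ K := by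
    intro l hl ζ hζ
    have h1 : π l ζ ∈ (fun x : H => π l x) '' K := ⟨ζ, hζ, rfl⟩
    have h2 : (fun x : H => π l x) '' K = closure ((fun x : H => π l x) '' (convexHull ℝ S)) :=
      (π l).toHomeomorph.image_closure _
    have h3 : (fun x : H => π l x) '' (convexHull ℝ S) = convexHull ℝ ((fun x : H => π l x) '' S) :=
      (hlinmap l).image_convexHull S
    rw [h2, h3, hSim l hl] at h1
    exact h1
  -- K is nonempty closed convex
  have hξS : ξ ∈ S := ⟨1, Λ.one_mem, by simp⟩
  have hKne : K.Nonempty := ⟨ξ, subset_closure (subset_convexHull ℝ S hξS)⟩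
  have hKconvex : Convex ℝ K := (convex_convexHull ℝ S).closure
  -- third bullet, as a have
  have hthird : ∀ ζ ∈ K, (∀ ζ' ∈ K, ‖ζ‖ ≤ ‖ζ'‖) → ζ ≠ 0 ∧ ∀ l ∈ Λ, π l ζ = ζ := by
    intro ζ hζ hmin
    have hζne : ζ ≠ 0 := by
      intro h
      have := hbound ζ hζ
      rw [h] at this
      simp at this
      nlinarith
    refine ⟨hζne, fun l hl => ?_⟩
    set ζ' : H := π l ζ with hζ'
    have hζ'K : ζ' ∈ K := hinvK l hl ζ hζ
    have hnorm' : ‖ζ'‖ = ‖ζ‖ := (π l).norm_map ζ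
    have hmK : (1 / 2 : ℝ) • ζ + (1 / 2 : ℝ) • ζ' ∈ K :=
      hKconvex hζ hζ'K (by norm_num) (by norm_num) (by norm_num)
    have hm := hmin _ hmK
    have hmnorm : ‖(1 / 2 : ℝ) • ζ + (1 / 2 : ℝ) • ζ'‖ = (1 / 2 : ℝ) * ‖ζ + ζ'‖ := by
      rw [← smul_add, norm_smul]
      simp
    have hpar := parallelogram_law_with_norm ℂ ζ ζ'
    have hzero : ‖ζ - ζ'‖ = 0 := by
      nlinarith [norm_nonneg (ζ - ζ'), norm_nonneg (ζ + ζ'), norm_nonneg ζ]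
    have := sub_eq_zero.mp (norm_eq_zero.mp hzero)
    exact this.symm
  -- the minimizer
  have hKcomp : IsComplete K := isClosed_closure.isComplete
  obtain ⟨v, hvK, hv⟩ :=
    exists_norm_eq_iInf_of_complete_convex (F := H) hKne hKcomp hKconvex 0
  have hvmin : ∀ w ∈ K, ‖v‖ ≤ ‖w‖ := by
    intro w hw
    have hb : BddBelow (Set.range fun w : K => ‖(0 : H) - w‖) :=
      ⟨0, Set.forall_mem_range.2 fun _ => norm_nonneg _⟩
    have h1 : ‖(0 : H) - v‖ ≤ ‖(0 : H) - w‖ := hv ▸ ciInf_le hb (⟨w, hw⟩ : K)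
    simpa using h1
  obtain ⟨hvne, hvinv⟩ := hthird v hvK hvmin
  refine ⟨⟨((‖v‖⁻¹ : ℝ) : ℂ) • v, ?_, ?_⟩, hbound, hthird⟩
  · rw [norm_smul]
    simp only [Complex.norm_real, Real.norm_eq_abs, abs_of_nonneg (inv_nonneg.2 (norm_nonneg v))]
    exact inv_mul_cancel₀ (norm_ne_zero_iff.2 hvne)
  · intro l hl
    rw [map_smul, hvinv l hl]
end
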